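/- Let S be an E-unitary inverse semigroup with finitely many idempotents. Then S has the Howson property if and only if its maximal group image S/σ has the Howson property. -/

import Mathlib

/-
Since there are finitely many idempotents, their product `z` is the least idempotent, and every
`s ∈ S` gives `z s z` in the maximal subgroup `H_z`. An idempotent-pure morphism `f` (which is
what E-unitarity plus `ker f = σ` amounts to) is injective on each `ℋ`-class, so `f` maps `H_z`
bijectively onto `G`, and a subgroup `H ≤ G` corresponds to the inverse subsemigroup
`H_z ∩ f⁻¹(H)`.

For the other direction, an inverse subsemigroup `T` is a groupoid under restricted products,
with finitely many objects. If `T` is generated by `X`, this groupoid is generated by the finite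
set `X E(T)`, so by a Schreier argument each vertex group is finitely generated. Conversely `T` is
generated by its idempotents, one arrow between each pair of connected objects and generators of
its vertex groups. As `f` is injective on `ℋ`-classes, the vertex groups of `U ∩ V` map onto the
intersections of those of `U` and `V`.
-/

inductive InvGen {S : Type*} [Mul S] [Inv S] (X : Set S) : S → Prop
  | base {x : S} : x ∈ X → InvGen X x
  | mul {a b : S} : InvGen X a → InvGen X b → InvGen X (a * b)
  | inv {a : S} : InvGen X a → InvGen X a⁻¹

def IsInvSub {S : Type*} [Mul S] [Inv S] (T : Set S) : Prop :=
  (∀ a ∈ T, ∀ b ∈ T, a * b ∈ T) ∧ ∀ a ∈ T, a⁻¹ ∈ T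

def InvFG {S : Type*} [Mul S] [Inv S] (T : Set S) : Prop :=
  ∃ X : Finset S, ↑X ⊆ T ∧ T = {s | InvGen (↑X : Set S) s}

def Howson (S : Type*) [Mul S] [Inv S] : Prop :=
  ∀ U V : Set S, IsInvSub U → IsInvSub V → InvFG U → InvFG V → InvFG (U ∩ V)
class InverseSemigroup (S : Type*) extends Semigroup S, Inv S where
  mul_inv_mul : ∀ a : S, a * a⁻¹ * a = a
  inv_invol : ∀ a : S, a⁻¹⁻¹ = a
  idem_comm : ∀ a b : S, (a * a⁻¹) * (b * b⁻¹) = (b * b⁻¹) * (a * a⁻¹)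
def HowsonGroup (G : Type*) [Group G] : Prop :=
  ∀ H K : Subgroup G, H.FG → K.FG → (H ⊓ K).FG

open scoped Pointwise

/-- The subgroupoid generated by `A`, for the restricted product (`a * b` is defined when
`a⁻¹ * a = b * b⁻¹`). -/
inductive RestrictedGen {S : Type*} [Mul S] [Inv S] (A : Set S) : S → Prop
  | of {a : S} : a ∈ A → RestrictedGen A a
  | mul {a b : S} : RestrictedGen A a → RestrictedGen A b → a⁻¹ * a = b * b⁻¹ →
      RestrictedGen A (a * b)
  | inv {a : S} : RestrictedGen A a → RestrictedGen A a⁻¹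

section Generation

variable {S : Type*} [Mul S] [Inv S] {T X : Set S} {s : S}

theorem IsInvSub.inter {U : Set S} (hT : IsInvSub T) (hU : IsInvSub U) : IsInvSub (T ∩ U) :=
  ⟨fun a ha b hb => ⟨hT.1 a ha.1 b hb.1, hU.1 a ha.2 b hb.2⟩,
    fun a ha => ⟨hT.2 a ha.1, hU.2 a ha.2⟩⟩

theorem IsInvSub.mem_of_invGen (hT : IsInvSub T) (hX : X ⊆ T) (hs : InvGen X s) : s ∈ T := by
  induction hs with
  | base hx => exact hX hx
  | mul _ _ iha ihb => exact hT.1 _ iha _ ihb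
  | inv _ iha => exact hT.2 _ iha

theorem IsInvSub.mem_of_restrictedGen (hT : IsInvSub T) (hX : X ⊆ T) (hs : RestrictedGen X s) :
    s ∈ T := by
  induction hs with
  | of hx => exact hX hx
  | mul _ _ _ iha ihb => exact hT.1 _ iha _ ihb
  | inv _ iha => exact hT.2 _ iha

theorem isInvSub_setOf_invGen (X : Set S) : IsInvSub {s | InvGen X s} :=
  ⟨fun _ ha _ hb => InvGen.mul ha hb, fun _ ha => InvGen.inv ha⟩

end Generation

namespace InverseSemigroup

variable {S : Type*} [InverseSemigroup S]

section Algebra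

variable {a b e e' : S}

theorem inv_mul_inv (a : S) : a⁻¹ * a * a⁻¹ = a⁻¹ := by
  simpa only [inv_invol] using mul_inv_mul a⁻¹

theorem isIdempotentElem_mul_inv (a : S) : IsIdempotentElem (a * a⁻¹) := by
  rw [IsIdempotentElem, ← mul_assoc, mul_inv_mul]

theorem isIdempotentElem_inv_mul (a : S) : IsIdempotentElem (a⁻¹ * a) := by
  simpa only [inv_invol] using isIdempotentElem_mul_inv a⁻¹

theorem commute_mul_inv (a b : S) : Commute (a * a⁻¹) (b * b⁻¹) := idem_comm a b

theorem commute_mul_inv_inv_mul (a b : S) : Commute (a * a⁻¹) (b⁻¹ * b) := by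
  simpa only [inv_invol] using commute_mul_inv a b⁻¹

/-- `e⁻¹ = (e⁻¹ e)(e e⁻¹)` is a product of commuting idempotents; so is `e = (e e⁻¹)(e⁻¹ e)`. -/
theorem inv_eq_of_isIdempotentElem (he : IsIdempotentElem e) : e⁻¹ = e := by
  have split : ∀ {w : S}, IsIdempotentElem w → w⁻¹ = w⁻¹ * w * (w * w⁻¹) := fun hw => by
    calc _ = _ * (_ * _) * _ := by rw [hw.eq, inv_mul_inv]
      _ = _ := by simp only [mul_assoc]
  have he' : IsIdempotentElem e⁻¹ := by
    rw [split he]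
    exact IsIdempotentElem.mul_of_commute (commute_mul_inv_inv_mul e e).symm
      (isIdempotentElem_inv_mul e) (isIdempotentElem_mul_inv e)
  calc e⁻¹ = e⁻¹ * e * (e * e⁻¹) := split he
    _ = e * e⁻¹ * (e⁻¹ * e) := (commute_mul_inv_inv_mul e e).eq.symm
    _ = e := by simpa only [inv_invol] using (split he').symm

theorem commute_of_isIdempotentElem (he : IsIdempotentElem e) (he' : IsIdempotentElem e') :
    Commute e e' := by
  simpa only [inv_eq_of_isIdempotentElem he, inv_eq_of_isIdempotentElem he', he.eq, he'.eq]
    using commute_mul_inv e e'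

theorem isIdempotentElem_mul (he : IsIdempotentElem e) (he' : IsIdempotentElem e') :
    IsIdempotentElem (e * e') :=
  IsIdempotentElem.mul_of_commute (commute_of_isIdempotentElem he he') he he'

theorem eq_of_inverses {u v : S} (hu : a * u * a = a) (hu' : u * a * u = u)
    (hv : a * v * a = a) (hv' : v * a * v = v) : u = v := by
  have idem : ∀ {w : S}, a * w * a = a → IsIdempotentElem (a * w) ∧ IsIdempotentElem (w * a) :=
    fun hw => ⟨by rw [IsIdempotentElem, ← mul_assoc, hw],
      by rw [IsIdempotentElem, mul_assoc, ← mul_assoc a, hw]⟩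
  have hu_eq : u = v * a * u :=
    calc u = u * (a * v * a) * u := by rw [hv, hu']
      _ = u * a * (v * a) * u := by simp only [mul_assoc]
      _ = v * a * (u * a * u) := by
        rw [(commute_of_isIdempotentElem (idem hu).2 (idem hv).2).eq]; simp only [mul_assoc]
      _ = v * a * u := by rw [hu']
  have hv_eq : v = v * a * u :=
    calc v = v * (a * u * a) * v := by rw [hu, hv']
      _ = v * (a * u * (a * v)) := by simp only [mul_assoc]
      _ = v * a * v * a * u := by
        rw [(commute_of_isIdempotentElem (idem hu).1 (idem hv).1).eq]; simp only [mul_assoc]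
      _ = v * a * u := by rw [hv']
  rw [hu_eq, ← hv_eq]

theorem mul_inv_rev (a b : S) : (a * b)⁻¹ = b⁻¹ * a⁻¹ := by
  refine (eq_of_inverses (mul_inv_mul (a * b)) (inv_mul_inv (a * b)) ?_ ?_)
  · calc a * b * (b⁻¹ * a⁻¹) * (a * b) = a * (b * b⁻¹ * (a⁻¹ * a)) * b := by
          simp only [mul_assoc]
      _ = a * a⁻¹ * a * (b * b⁻¹ * b) := by
          rw [(commute_mul_inv_inv_mul b a).eq]; simp only [mul_assoc]
      _ = a * b := by rw [mul_inv_mul, mul_inv_mul]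
  · calc b⁻¹ * a⁻¹ * (a * b) * (b⁻¹ * a⁻¹) = b⁻¹ * (a⁻¹ * a * (b * b⁻¹)) * a⁻¹ := by
          simp only [mul_assoc]
      _ = b⁻¹ * b * b⁻¹ * (a⁻¹ * a * a⁻¹) := by
          rw [← (commute_mul_inv_inv_mul b a).eq]; simp only [mul_assoc]
      _ = b⁻¹ * a⁻¹ := by rw [inv_mul_inv, inv_mul_inv]

theorem isIdempotentElem_mul_mul_inv (he : IsIdempotentElem e) (a : S) :
    IsIdempotentElem (a * e * a⁻¹) :=
  calc a * e * a⁻¹ * (a * e * a⁻¹) = a * (e * (a⁻¹ * a)) * e * a⁻¹ := by simp only [mul_assoc]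
    _ = a * a⁻¹ * a * (e * e) * a⁻¹ := by
        rw [(commute_of_isIdempotentElem he (isIdempotentElem_inv_mul a)).eq]
        simp only [mul_assoc]
    _ = a * e * a⁻¹ := by rw [mul_inv_mul, he.eq]

theorem isIdempotentElem_inv_mul_mul (he : IsIdempotentElem e) (a : S) :
    IsIdempotentElem (a⁻¹ * e * a) := by
  simpa only [inv_invol] using isIdempotentElem_mul_mul_inv he a⁻¹

theorem mul_mul_inv_of_inv_mul_eq (h : a⁻¹ * a = b * b⁻¹) : a * b * (a * b)⁻¹ = a * a⁻¹ := by
  calc a * b * (a * b)⁻¹ = a * (b * b⁻¹) * a⁻¹ := by rw [mul_inv_rev]; simp only [mul_assoc]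
    _ = a * a⁻¹ := by rw [← h, ← mul_assoc, mul_inv_mul]

theorem inv_mul_mul_of_inv_mul_eq (h : a⁻¹ * a = b * b⁻¹) : (a * b)⁻¹ * (a * b) = b⁻¹ * b := by
  calc (a * b)⁻¹ * (a * b) = b⁻¹ * (a⁻¹ * a) * b := by rw [mul_inv_rev]; simp only [mul_assoc]
    _ = b⁻¹ * b := by rw [h, ← mul_assoc, inv_mul_inv]

theorem mul_mul_self_of_isIdempotentElem (he : IsIdempotentElem e) (he' : IsIdempotentElem e') :
    e * e' * e = e * e' := by
  rw [mul_assoc, (commute_of_isIdempotentElem he' he).eq, ← mul_assoc, he.eq]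

theorem mul_eq_mul_mul_inv_mul (he : IsIdempotentElem e) (b : S) : e * b = b * (b⁻¹ * e * b) :=
  calc e * b = e * (b * b⁻¹) * b := by rw [mul_assoc, mul_inv_mul]
    _ = b * (b⁻¹ * e * b) := by
      rw [(commute_of_isIdempotentElem he (isIdempotentElem_mul_inv b)).eq]
      simp only [mul_assoc]

/-- Every product is a restricted product: the domain of the first factor below is the range of
the second (next lemma). -/
theorem mul_eq_restricted_mul (a b : S) : a * b = a * (b * b⁻¹) * (a⁻¹ * a * b) :=
  calc a * b = a * a⁻¹ * a * (b * b⁻¹ * b) := by rw [mul_inv_mul, mul_inv_mul]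
    _ = a * ((a⁻¹ * a) * (b * b⁻¹)) * b := by simp only [mul_assoc]
    _ = a * (b * b⁻¹) * (a⁻¹ * a * b) := by
      rw [← (commute_mul_inv_inv_mul b a).eq]; simp only [mul_assoc]

theorem inv_mul_eq_mul_inv_of_restricted (a b : S) :
    (a * (b * b⁻¹))⁻¹ * (a * (b * b⁻¹)) = a⁻¹ * a * b * (a⁻¹ * a * b)⁻¹ := by
  have hp := isIdempotentElem_inv_mul a
  have hq := isIdempotentElem_mul_inv b
  calc (a * (b * b⁻¹))⁻¹ * (a * (b * b⁻¹)) = b * b⁻¹ * (a⁻¹ * a) * (b * b⁻¹) := by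
        rw [mul_inv_rev, inv_eq_of_isIdempotentElem hq]; simp only [mul_assoc]
    _ = a⁻¹ * a * (b * b⁻¹) * (a⁻¹ * a) := by
        rw [mul_mul_self_of_isIdempotentElem hq hp, mul_mul_self_of_isIdempotentElem hp hq,
          (commute_mul_inv_inv_mul b a).eq]
    _ = a⁻¹ * a * b * (a⁻¹ * a * b)⁻¹ := by
        rw [mul_inv_rev, inv_eq_of_isIdempotentElem hp]; simp only [mul_assoc]

end Algebra

variable {G : Type*} [Group G]

section Groupoid

variable {T X : Set S} {a e p q t : S}

/-- For idempotent `e` this is the group `ℋ`-class of `e`. -/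
def maxSubgroup (e : S) : Set S := {s | s * s⁻¹ = e ∧ s⁻¹ * s = e}

theorem mem_maxSubgroup_self (he : IsIdempotentElem e) : e ∈ maxSubgroup e := by
  have h : e * e⁻¹ = e := by rw [inv_eq_of_isIdempotentElem he, he.eq]
  exact ⟨h, by rwa [inv_eq_of_isIdempotentElem he] at h ⊢⟩

theorem isInvSub_maxSubgroup (e : S) : IsInvSub (maxSubgroup e) := by
  refine ⟨fun a ⟨ha, ha'⟩ b ⟨hb, hb'⟩ => ?_, fun a ⟨ha, ha'⟩ => ?_⟩
  · have h : a⁻¹ * a = b * b⁻¹ := ha'.trans hb.symm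
    exact ⟨(mul_mul_inv_of_inv_mul_eq h).trans ha, (inv_mul_mul_of_inv_mul_eq h).trans hb'⟩
  · exact ⟨by rwa [inv_invol], by rwa [inv_invol]⟩

/-- Right multiplication by idempotents makes the induction go through: `a * (b * j)` is a
restricted product of some `a * j'` and `b * j''`. -/
theorem restrictedGen_mul_of_invGen (hT : IsInvSub T) (hX : X ⊆ T) (ht : InvGen X t) :
    ∀ j ∈ T, IsIdempotentElem j → RestrictedGen (X * {j ∈ T | IsIdempotentElem j}) (t * j) := by
  induction ht with
  | base hx => exact fun j hj hj' => .of (Set.mul_mem_mul hx ⟨hj, hj'⟩)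
  | @mul a b ha hb iha ihb =>
    intro j hj hj'
    have haT := hT.mem_of_invGen hX ha
    have hbT := hT.mem_of_invGen hX hb
    have hbj : b * j ∈ T := hT.1 _ hbT _ hj
    have hp := isIdempotentElem_inv_mul a
    have hleft := iha _ (hT.1 _ hbj _ (hT.2 _ hbj)) (isIdempotentElem_mul_inv (b * j))
    have hright : RestrictedGen (X * {j ∈ T | IsIdempotentElem j}) (a⁻¹ * a * (b * j)) := by
      rw [← mul_assoc, mul_eq_mul_mul_inv_mul hp b, mul_assoc b]
      exact ihb _ (hT.1 _ (hT.1 _ (hT.1 _ (hT.2 _ hbT) _ (hT.1 _ (hT.2 _ haT) _ haT)) _ hbT) _ hj)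
        (isIdempotentElem_mul (isIdempotentElem_inv_mul_mul hp b) hj')
    have h := RestrictedGen.mul hleft hright (inv_mul_eq_mul_inv_of_restricted a (b * j))
    rwa [← mul_eq_restricted_mul, ← mul_assoc] at h
  | @inv a ha iha =>
    intro j hj hj'
    have haT := hT.mem_of_invGen hX ha
    have key : a⁻¹ * j = (a * (a⁻¹ * j * a))⁻¹ := by
      rw [← mul_eq_mul_mul_inv_mul hj', mul_inv_rev, inv_eq_of_isIdempotentElem hj']
    rw [key]
    exact .inv (iha _ (hT.1 _ (hT.1 _ (hT.2 _ haT) _ hj) _ haT)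
      (isIdempotentElem_inv_mul_mul hj' a))

theorem restrictedGen_of_invGen (hT : IsInvSub T) (hX : X ⊆ T) (ht : InvGen X t) :
    RestrictedGen (X * {j ∈ T | IsIdempotentElem j}) t := by
  have htT := hT.mem_of_invGen hX ht
  simpa only [← mul_assoc, mul_inv_mul] using
    restrictedGen_mul_of_invGen hT hX ht _ (hT.1 _ (hT.2 _ htT) _ htT) (isIdempotentElem_inv_mul t)

theorem mul_mul_inv_mem_maxSubgroup (hp : p * p⁻¹ = e) (hpa : p⁻¹ * p = a * a⁻¹)
    (hq : q * q⁻¹ = e) (hqa : q⁻¹ * q = a⁻¹ * a) : p * a * q⁻¹ ∈ maxSubgroup e := by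
  have hpa' : (p * a)⁻¹ * (p * a) = q⁻¹ * q⁻¹⁻¹ := by
    rw [inv_mul_mul_of_inv_mul_eq hpa, inv_invol, hqa]
  refine ⟨?_, ?_⟩
  · rw [mul_mul_inv_of_inv_mul_eq hpa', mul_mul_inv_of_inv_mul_eq hpa, hp]
  · rw [inv_mul_mul_of_inv_mul_eq hpa', inv_invol, hq]

theorem mul_inv_mem_maxSubgroup {r : S} (hr₁ : r * r⁻¹ = t * t⁻¹) (hr₂ : r⁻¹ * r = t⁻¹ * t) :
    t * r⁻¹ ∈ maxSubgroup (t * t⁻¹) := by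
  have h : t⁻¹ * t = r⁻¹ * r⁻¹⁻¹ := by rw [inv_invol, hr₂]
  refine ⟨mul_mul_inv_of_inv_mul_eq h, ?_⟩
  rw [inv_mul_mul_of_inv_mul_eq h, inv_invol, hr₁]

end Groupoid

section Hom

variable (f : S →ₙ* G) {T U V W X : Set S} {e s t : S}

theorem map_inv (a : S) : f a⁻¹ = (f a)⁻¹ := by
  refine (inv_eq_of_mul_eq_one_right (mul_right_cancel (b := f a) ?_)).symm
  rw [← map_mul, ← map_mul, mul_inv_mul, one_mul]

theorem map_eq_one_of_isIdempotentElem (he : IsIdempotentElem e) : f e = 1 :=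
  mul_eq_left.1 (by rw [← map_mul, he.eq])

def IsIdempotentPure : Prop := ∀ x, f x = 1 → IsIdempotentElem x

variable {f}

theorem isIdempotentPure_of_eUnitary
    (hunitary : ∀ e s : S, IsIdempotentElem e → IsIdempotentElem (e * s) → IsIdempotentElem s)
    (hker : ∀ a b, f a = f b → ∃ e, IsIdempotentElem e ∧ e * a = e * b) :
    IsIdempotentPure f := by
  intro x hx
  obtain ⟨e, he, hex⟩ := hker x (x * x⁻¹) (by rw [map_mul, map_inv, hx, inv_one, mul_one])
  exact hunitary e x he (hex ▸ isIdempotentElem_mul he (isIdempotentElem_mul_inv x))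

theorem IsIdempotentPure.eq_of_map_eq (hf : IsIdempotentPure f) (h : f s = f t)
    (h' : s * s⁻¹ = t * t⁻¹) : s = t := by
  have hi : IsIdempotentElem (s⁻¹ * t) := hf _ (by rw [map_mul, map_inv, h, inv_mul_cancel])
  have hi' : t⁻¹ * s = s⁻¹ * t := by
    rw [← inv_eq_of_isIdempotentElem hi, mul_inv_rev, inv_invol]
  calc s = t * (s⁻¹ * t) := by rw [← hi', ← mul_assoc, ← h', mul_inv_mul]
    _ = s * (s⁻¹ * t) * (s⁻¹ * t) := by rw [← mul_assoc s, h', mul_inv_mul]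
    _ = t := by rw [mul_assoc, hi.eq, ← mul_assoc, h', mul_inv_mul]

theorem IsIdempotentPure.injOn_maxSubgroup (hf : IsIdempotentPure f) (e : S) :
    Set.InjOn f (maxSubgroup e) :=
  fun _ hs _ ht h => hf.eq_of_map_eq h (hs.1.trans ht.1.symm)

variable (f)

theorem closure_image_eq (hW : IsInvSub W) {w : S} (hw : w ∈ W) :
    (Subgroup.closure (f '' W) : Set G) = f '' W := by
  refine subset_antisymm (fun g hg => ?_) Subgroup.subset_closure
  induction hg using Subgroup.closure_induction with
  | mem g hg => exact hg
  | one => exact ⟨w * w⁻¹, hW.1 _ hw _ (hW.2 _ hw),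
      map_eq_one_of_isIdempotentElem f (isIdempotentElem_mul_inv w)⟩
  | mul _ _ _ _ ha hb =>
    obtain ⟨a, ha, rfl⟩ := ha
    obtain ⟨b, hb, rfl⟩ := hb
    exact ⟨a * b, hW.1 _ ha _ hb, map_mul f a b⟩
  | inv _ _ ha =>
    obtain ⟨a, ha, rfl⟩ := ha
    exact ⟨a⁻¹, hW.2 _ ha, map_inv f a⟩

theorem map_mem_closure_image_of_invGen (hs : InvGen X s) : f s ∈ Subgroup.closure (f '' X) := by
  induction hs with
  | base hx => exact Subgroup.subset_closure (Set.mem_image_of_mem f hx)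
  | mul _ _ iha ihb => rw [map_mul]; exact mul_mem iha ihb
  | inv _ iha => rw [map_inv]; exact inv_mem iha

/-- The image under `f` of the vertex group at `e` of `T`, a groupoid under restricted products. -/
def vertexSubgroup (T : Set S) (e : S) : Subgroup G := Subgroup.closure (f '' (T ∩ maxSubgroup e))

theorem coe_vertexSubgroup (hT : IsInvSub T) (heT : e ∈ T) (he : IsIdempotentElem e) :
    (vertexSubgroup f T e : Set G) = f '' (T ∩ maxSubgroup e) :=
  closure_image_eq f (hT.inter (isInvSub_maxSubgroup e)) ⟨heT, mem_maxSubgroup_self he⟩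

variable {f}

theorem IsIdempotentPure.mem_of_map_mem_vertexSubgroup (hf : IsIdempotentPure f)
    (hT : IsInvSub T) (heT : e ∈ T) (he : IsIdempotentElem e) (hs : s * s⁻¹ = e)
    (hfs : f s ∈ vertexSubgroup f T e) : s ∈ T := by
  rw [← SetLike.mem_coe, coe_vertexSubgroup f hT heT he] at hfs
  obtain ⟨w, ⟨hwT, hw, -⟩, hws⟩ := hfs
  rwa [← hf.eq_of_map_eq hws (hw.trans hs.symm)]

theorem IsIdempotentPure.vertexSubgroup_inter (hf : IsIdempotentPure f) (hU : IsInvSub U)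
    (hV : IsInvSub V) (heU : e ∈ U) (heV : e ∈ V) (he : IsIdempotentElem e) :
    vertexSubgroup f (U ∩ V) e = vertexSubgroup f U e ⊓ vertexSubgroup f V e := by
  apply SetLike.coe_injective
  rw [Subgroup.coe_inf, coe_vertexSubgroup f (hU.inter hV) ⟨heU, heV⟩ he,
    coe_vertexSubgroup f hU heU he, coe_vertexSubgroup f hV heV he, Set.inter_inter_distrib_right,
    (hf.injOn_maxSubgroup e).image_inter Set.inter_subset_right Set.inter_subset_right]

end Hom

section Schreier

variable (f : S →ₙ* G) {A T : Set S} {a b e s : S}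

/-- If `π v` is the image of an arrow from `v` to a base point, `pathConj f π s` is the image of
the loop at the base point obtained by transporting `s` along these arrows. -/
def pathConj (π : S → G) (s : S) : G := π (s * s⁻¹) * f s * (π (s⁻¹ * s))⁻¹

variable {f} (π : S → G)

theorem pathConj_mul (h : a⁻¹ * a = b * b⁻¹) :
    pathConj f π (a * b) = pathConj f π a * pathConj f π b := by
  simp only [pathConj, mul_mul_inv_of_inv_mul_eq h, inv_mul_mul_of_inv_mul_eq h, map_mul, h]
  group

theorem pathConj_inv (a : S) : pathConj f π a⁻¹ = (pathConj f π a)⁻¹ := by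
  simp only [pathConj, inv_invol, map_inv]
  group

theorem pathConj_mem_closure (hT : IsInvSub T) (hAT : A ⊆ T) {C : Set S}
    (hC : ∀ s ∈ T, s * s⁻¹ ∈ C → s⁻¹ * s ∈ C) (hs : RestrictedGen A s) (hsC : s * s⁻¹ ∈ C) :
    pathConj f π s ∈ Subgroup.closure (pathConj f π '' {a ∈ A | a * a⁻¹ ∈ C}) := by
  induction hs with
  | of ha => exact Subgroup.subset_closure ⟨_, ⟨ha, hsC⟩, rfl⟩
  | @mul a b ha hb hab iha ihb =>
    rw [mul_mul_inv_of_inv_mul_eq hab] at hsC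
    rw [pathConj_mul π hab]
    exact mul_mem (iha hsC) (ihb (hab ▸ hC a (hT.mem_of_restrictedGen hAT ha) hsC))
  | @inv a ha iha =>
    rw [inv_invol] at hsC
    rw [pathConj_inv]
    refine inv_mem (iha ?_)
    simpa only [inv_invol] using
      hC a⁻¹ (hT.2 _ (hT.mem_of_restrictedGen hAT ha)) (by rwa [inv_invol])

theorem vertexSubgroup_fg_of_restrictedGen (hA : A.Finite) (hT : IsInvSub T) (hAT : A ⊆ T)
    (hgen : ∀ t ∈ T, RestrictedGen A t) (heT : e ∈ T) (he : IsIdempotentElem e) :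
    (vertexSubgroup f T e).FG := by
  -- the connected component of `e`
  set C := {v | ∃ p ∈ T, p * p⁻¹ = e ∧ p⁻¹ * p = v}
  have heC : e * e⁻¹ = e ∧ e⁻¹ * e = e := mem_maxSubgroup_self he
  have hC : ∀ s ∈ T, s * s⁻¹ ∈ C → s⁻¹ * s ∈ C := by
    rintro s hsT ⟨p, hpT, hp, hps⟩
    exact ⟨p * s, hT.1 _ hpT _ hsT, (mul_mul_inv_of_inv_mul_eq hps).trans hp,
      inv_mul_mul_of_inv_mul_eq hps⟩
  have hpath : ∀ v ∈ C, ∃ p ∈ T, p * p⁻¹ = e ∧ p⁻¹ * p = v ∧ (v = e → p = e) := by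
    rintro v ⟨p, hpT, hp, hpv⟩
    by_cases hv : v = e
    · exact ⟨e, heT, heC.1, hv ▸ heC.2, fun _ => rfl⟩
    · exact ⟨p, hpT, hp, hpv, fun h => absurd h hv⟩
  choose! path hpathT hpath hpathv hpathe using hpath
  refine (Subgroup.fg_iff _).2 ⟨pathConj f (fun v => f (path v)) '' {a ∈ A | a * a⁻¹ ∈ C},
    le_antisymm (Subgroup.closure_le _ |>.2 ?_) (Subgroup.closure_le _ |>.2 ?_),
    (hA.subset (Set.sep_subset _ _)).image _⟩
  · rintro _ ⟨a, ⟨haA, haC⟩, rfl⟩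
    have haT := hAT haA
    have haC' := hC a haT haC
    rw [coe_vertexSubgroup f hT heT he]
    refine ⟨path (a * a⁻¹) * a * (path (a⁻¹ * a))⁻¹, ⟨?_, ?_⟩, ?_⟩
    · exact hT.1 _ (hT.1 _ (hpathT _ haC) _ haT) _ (hT.2 _ (hpathT _ haC'))
    · exact mul_mul_inv_mem_maxSubgroup (hpath _ haC) (hpathv _ haC) (hpath _ haC')
        (hpathv _ haC')
    · simp only [pathConj, map_mul, map_inv]
  · rintro _ ⟨t, ⟨htT, ht, ht'⟩, rfl⟩
    have hC_e : e ∈ C := ⟨e, heT, heC.1, heC.2⟩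
    have h := pathConj_mem_closure (f := f) (fun v => f (path v)) hT hAT hC (hgen t htT) (ht ▸ hC_e)
    simpa only [pathConj, ht, ht', hpathe e hC_e rfl, map_eq_one_of_isIdempotentElem f he,
      one_mul, inv_one, mul_one, SetLike.mem_coe] using h

theorem vertexSubgroup_fg_of_invFG (hE : {e : S | IsIdempotentElem e}.Finite) (hT : IsInvSub T)
    (hfg : InvFG T) (heT : e ∈ T) (he : IsIdempotentElem e) : (vertexSubgroup f T e).FG := by
  obtain ⟨X, hXT, hTX⟩ := hfg
  refine vertexSubgroup_fg_of_restrictedGen (A := (X : Set S) * {j ∈ T | IsIdempotentElem j})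
    (X.finite_toSet.mul (hE.subset fun j hj => hj.2)) hT ?_ (fun t ht => ?_) heT he
  · rintro _ ⟨x, hx, j, hj, rfl⟩
    exact hT.1 _ (hXT hx) _ hj.1
  · rw [hTX] at ht
    exact restrictedGen_of_invGen hT hXT ht

end Schreier

section Generators

variable {f : S →ₙ* G} {T : Set S}

theorem exists_finite_generating_subset (hT : IsInvSub T) {e : S} (heT : e ∈ T)
    (he : IsIdempotentElem e) (hfg : (vertexSubgroup f T e).FG) :
    ∃ L ⊆ T ∩ maxSubgroup e, L.Finite ∧ Subgroup.closure (f '' L) = vertexSubgroup f T e := by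
  obtain ⟨Γ, hΓ, hΓfin⟩ := (Subgroup.fg_iff _).1 hfg
  refine Set.exists_subset_image_finite_and (p := (Subgroup.closure · = vertexSubgroup f T e)) |>.1
    ⟨Γ, ?_, hΓfin, hΓ⟩
  rw [← coe_vertexSubgroup f hT heT he, ← hΓ]
  exact Subgroup.subset_closure

theorem exists_finite_representatives (hE : {e : S | IsIdempotentElem e}.Finite) :
    ∃ R ⊆ T, R.Finite ∧ ∀ t ∈ T, ∃ r ∈ R, r * r⁻¹ = t * t⁻¹ ∧ r⁻¹ * r = t⁻¹ * t := by
  set ends : S → S × S := fun t => (t * t⁻¹, t⁻¹ * t)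
  obtain ⟨R, hRT, hRfin, hR⟩ : ∃ R ⊆ T, R.Finite ∧ ends '' R = ends '' T := by
    refine Set.exists_subset_image_finite_and (p := (· = ends '' T)) |>.1
      ⟨_, subset_rfl, (hE.prod hE).subset ?_, rfl⟩
    rintro _ ⟨t, -, rfl⟩
    exact ⟨isIdempotentElem_mul_inv t, isIdempotentElem_inv_mul t⟩
  refine ⟨R, hRT, hRfin, fun t ht => ?_⟩
  obtain ⟨r, hrR, hr⟩ : ends t ∈ ends '' R := hR ▸ ⟨t, ht, rfl⟩
  exact ⟨r, hrR, Prod.mk.inj hr⟩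

theorem IsIdempotentPure.invFG_of_forall_vertexSubgroup_fg (hf : IsIdempotentPure f)
    (hE : {e : S | IsIdempotentElem e}.Finite) (hT : IsInvSub T)
    (hfg : ∀ e ∈ T, IsIdempotentElem e → (vertexSubgroup f T e).FG) : InvFG T := by
  set ET := {e ∈ T | IsIdempotentElem e}
  have hET : ET.Finite := hE.subset fun e he => he.2
  obtain ⟨R, hRT, hRfin, hR⟩ := exists_finite_representatives (T := T) hE
  choose! L hLT hLfin hL using fun e (he : e ∈ ET) => exists_finite_generating_subset hT he.1 he.2
    (hfg e he.1 he.2)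
  set X := ET ∪ R ∪ ⋃ e ∈ ET, L e
  have hXfin : X.Finite := (hET.union hRfin).union (hET.biUnion hLfin)
  have hXT : X ⊆ T := Set.union_subset (Set.union_subset (fun e he => he.1) hRT)
    (Set.iUnion₂_subset fun e he => (hLT e he).trans Set.inter_subset_left)
  refine ⟨hXfin.toFinset, by rwa [hXfin.coe_toFinset], ?_⟩
  rw [hXfin.coe_toFinset]
  refine subset_antisymm (fun t htT => ?_) (fun t ht => hT.mem_of_invGen hXT ht)
  obtain ⟨r, hrR, hr₁, hr₂⟩ := hR t htT
  have heET : t * t⁻¹ ∈ ET := ⟨hT.1 _ htT _ (hT.2 _ htT), isIdempotentElem_mul_inv t⟩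
  have hloop := mul_inv_mem_maxSubgroup hr₁ hr₂
  have hmem : f (t * r⁻¹) ∈ vertexSubgroup f T (t * t⁻¹) :=
    Subgroup.subset_closure ⟨_, ⟨hT.1 _ htT _ (hT.2 _ (hRT hrR)), hloop⟩, rfl⟩
  rw [← hL _ heET] at hmem
  have hloop' : t * r⁻¹ ∈ {s | InvGen X s} := by
    refine hf.mem_of_map_mem_vertexSubgroup (isInvSub_setOf_invGen X) (.base (.inl (.inl heET)))
      heET.2 hloop.1 (Subgroup.closure_mono (Set.image_mono fun s hs => ?_) hmem)
    exact ⟨.base (.inr (Set.mem_biUnion heET hs)), (hLT _ heET hs).2⟩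
  have ht : t = t * r⁻¹ * r := by rw [mul_assoc, hr₂, ← mul_assoc, mul_inv_mul]
  rw [ht]
  exact .mul hloop' (.base (.inl (.inr hrR)))

theorem IsIdempotentPure.howson_of_howsonGroup (hf : IsIdempotentPure f)
    (hE : {e : S | IsIdempotentElem e}.Finite) (hG : HowsonGroup G) : Howson S := by
  intro U V hU hV hUfg hVfg
  refine hf.invFG_of_forall_vertexSubgroup_fg hE (hU.inter hV) fun e he he' => ?_
  rw [hf.vertexSubgroup_inter hU hV he.1 he.2 he']
  exact hG _ _ (vertexSubgroup_fg_of_invFG hE hU hUfg he.1 he')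
    (vertexSubgroup_fg_of_invFG hE hV hVfg he.2 he')

end Generators

section LeastIdempotent

variable {f : S →ₙ* G} {z : S}

def IsLeastIdempotent (z : S) : Prop := IsIdempotentElem z ∧ ∀ e, IsIdempotentElem e → z * e = z

theorem exists_isLeastIdempotent [Nonempty S] (hE : {e : S | IsIdempotentElem e}.Finite) :
    ∃ z : S, IsLeastIdempotent z := by
  classical
  obtain ⟨s⟩ := ‹Nonempty S›
  have key (F : Finset S) : ∃ z, IsIdempotentElem z ∧ ∀ e ∈ F, IsIdempotentElem e → z * e = z := by
    induction F using Finset.induction_on with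
    | empty => exact ⟨s * s⁻¹, isIdempotentElem_mul_inv s, by simp⟩
    | insert a F _ ih =>
      obtain ⟨z, hz, hzF⟩ := ih
      by_cases ha : IsIdempotentElem a
      · refine ⟨z * a, isIdempotentElem_mul hz ha, fun e he he' => ?_⟩
        rcases Finset.mem_insert.1 he with rfl | he
        · rw [mul_assoc, ha.eq]
        · rw [mul_assoc, (commute_of_isIdempotentElem ha he').eq, ← mul_assoc, hzF e he he']
      · refine ⟨z, hz, fun e he he' => ?_⟩
        rcases Finset.mem_insert.1 he with rfl | he
        · exact absurd he' ha
        · exact hzF e he he'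
  obtain ⟨z, hz, hzE⟩ := key hE.toFinset
  exact ⟨z, hz, fun e he => hzE e (hE.mem_toFinset.2 he) he⟩

theorem IsLeastIdempotent.mul_mul_mem_maxSubgroup (hz : IsLeastIdempotent z) (s : S) :
    z * s * z ∈ maxSubgroup z := by
  have hz' := inv_eq_of_isIdempotentElem hz.1
  constructor
  · calc z * s * z * (z * s * z)⁻¹ = z * (s * (z * z) * s⁻¹) * z := by
          rw [mul_inv_rev, mul_inv_rev, hz']; simp only [mul_assoc]
      _ = z := by rw [hz.1.eq, hz.2 _ (isIdempotentElem_mul_mul_inv hz.1 s), hz.1.eq]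
  · calc (z * s * z)⁻¹ * (z * s * z) = z * (s⁻¹ * (z * z) * s) * z := by
          rw [mul_inv_rev, mul_inv_rev, hz']; simp only [mul_assoc]
      _ = z := by rw [hz.1.eq, hz.2 _ (isIdempotentElem_inv_mul_mul hz.1 s), hz.1.eq]

variable (f) in
theorem isInvSub_preimage (H : Subgroup G) : IsInvSub (f ⁻¹' H) :=
  ⟨fun a ha b hb => by simpa only [Set.mem_preimage, map_mul, SetLike.mem_coe] using mul_mem ha hb,
    fun a ha => by simpa only [Set.mem_preimage, map_inv, SetLike.mem_coe] using inv_mem ha⟩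

theorem image_maxSubgroup_inter_preimage (hz : IsLeastIdempotent z)
    (hsurj : Function.Surjective f) (H : Subgroup G) : f '' (maxSubgroup z ∩ f ⁻¹' H) = H := by
  rw [Set.image_inter_preimage, Set.inter_eq_right]
  intro g _
  refine ⟨z * Function.surjInv hsurj g * z, hz.mul_mul_mem_maxSubgroup _, ?_⟩
  simp only [map_mul, map_eq_one_of_isIdempotentElem f hz.1, Function.surjInv_eq, one_mul, mul_one]

theorem IsIdempotentPure.invFG_maxSubgroup_inter_preimage (hf : IsIdempotentPure f)
    (hz : IsLeastIdempotent z) (hsurj : Function.Surjective f) {H : Subgroup G} (hH : H.FG) :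
    InvFG (maxSubgroup z ∩ f ⁻¹' H) := by
  classical
  obtain ⟨Γ, hΓ⟩ := hH
  set lift : G → S := fun g => z * Function.surjInv hsurj g * z
  have hlift (g : G) : f (lift g) = g := by
    simp only [lift, map_mul, map_eq_one_of_isIdempotentElem f hz.1, Function.surjInv_eq, one_mul,
      mul_one]
  set X : Finset S := insert z (Γ.image lift)
  have hXW : (X : Set S) ⊆ maxSubgroup z ∩ f ⁻¹' H := by
    intro s hs
    rcases Finset.mem_insert.1 hs with rfl | hs
    · exact ⟨mem_maxSubgroup_self hz.1, by
        simp [Set.mem_preimage, map_eq_one_of_isIdempotentElem f hz.1, one_mem]⟩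
    · obtain ⟨g, hg, rfl⟩ := Finset.mem_image.1 hs
      refine ⟨hz.mul_mul_mem_maxSubgroup _, ?_⟩
      rw [Set.mem_preimage, hlift, ← hΓ]
      exact Subgroup.subset_closure hg
  have hW := (isInvSub_maxSubgroup z).inter (isInvSub_preimage f H)
  refine ⟨X, hXW, subset_antisymm (fun s hs => ?_) (fun s hs => hW.mem_of_invGen hXW hs)⟩
  refine hf.mem_of_map_mem_vertexSubgroup (isInvSub_setOf_invGen _)
    (.base (Finset.mem_insert_self z _)) hz.1 hs.1.1 ?_
  rw [← hΓ] at hs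
  refine (Subgroup.closure_le _).2 (fun g hg => Subgroup.subset_closure ?_) hs.2
  refine ⟨lift g, ⟨.base (Finset.mem_insert_of_mem (Finset.mem_image_of_mem lift hg)),
    hz.mul_mul_mem_maxSubgroup _⟩, hlift g⟩

theorem fg_of_invFG_of_image_eq {T : Set S} {H : Subgroup G} (hT : InvFG T) (hTH : f '' T = H) :
    H.FG := by
  obtain ⟨X, hXT, hTX⟩ := hT
  refine (Subgroup.fg_iff _).2 ⟨f '' X, le_antisymm ?_ ?_, X.finite_toSet.image f⟩
  · exact (Subgroup.closure_le _).2 (hTH ▸ Set.image_mono hXT)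
  · intro g hg
    rw [← SetLike.mem_coe, ← hTH, hTX] at hg
    obtain ⟨s, hs, rfl⟩ := hg
    exact map_mem_closure_image_of_invGen f hs

theorem IsIdempotentPure.howsonGroup_of_howson (hf : IsIdempotentPure f)
    (hE : {e : S | IsIdempotentElem e}.Finite) (hsurj : Function.Surjective f) (hS : Howson S) :
    HowsonGroup G := by
  have : Nonempty S := ⟨Function.surjInv hsurj 1⟩
  obtain ⟨z, hz⟩ := exists_isLeastIdempotent hE
  intro H K hH hK
  have h := hS _ _ ((isInvSub_maxSubgroup z).inter (isInvSub_preimage f H))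
    ((isInvSub_maxSubgroup z).inter (isInvSub_preimage f K))
    (hf.invFG_maxSubgroup_inter_preimage hz hsurj hH)
    (hf.invFG_maxSubgroup_inter_preimage hz hsurj hK)
  rw [← Set.inter_inter_distrib_left, ← Set.preimage_inter, ← Subgroup.coe_inf] at h
  exact fg_of_invFG_of_image_eq h (image_maxSubgroup_inter_preimage hz hsurj _)

end LeastIdempotent

end InverseSemigroup

theorem stmt_5 {S : Type*} [InverseSemigroup S]
    (hE : {e : S | e * e = e}.Finite)
    (hEunitary : ∀ e s : S, e * e = e → (e * s) * (e * s) = e * s → s * s = s)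
    (G : Type*) [Group G] (f : S → G)
    (hhom : ∀ a b : S, f (a * b) = f a * f b)
    (hsurj : Function.Surjective f)
    (hker : ∀ a b : S, f a = f b ↔ ∃ e : S, e * e = e ∧ e * a = e * b) :
    Howson S ↔ HowsonGroup G := by
  let φ : S →ₙ* G := ⟨f, hhom⟩
  have hφ : InverseSemigroup.IsIdempotentPure φ :=
    InverseSemigroup.isIdempotentPure_of_eUnitary hEunitary fun a b h => (hker a b).1 h
  exact ⟨hφ.howsonGroup_of_howson hE hsurj, hφ.howson_of_howsonGroup hE⟩
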